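/- A minimal system that has at least one mean equicontinuous point is mean equicontinuous. -/

import Mathlib

open Filter Topology MeasureTheory
open scoped Classical

noncomputable def avgDist {Z : Type*} [MetricSpace Z] (R : Z → Z) (x y : Z) (n : ℕ) : ℝ :=
  (n : ℝ)⁻¹ * ∑ i ∈ Finset.range n, dist (R^[i] x) (R^[i] y)

def MeanEquicontinuous {Z : Type*} [MetricSpace Z] (R : Z → Z) : Prop :=
  ∀ ε > 0, ∃ δ > 0, ∀ x y : Z, dist x y < δ →
    Filter.limsup (avgDist R x y) Filter.atTop < ε

def MeanEqPtAt {Z : Type*} [MetricSpace Z] (R : Z → Z) (x : Z) : Prop :=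
  ∀ ε > 0, ∃ δ > 0, ∀ y : Z, dist x y < δ →
    Filter.limsup (avgDist R x y) Filter.atTop < ε

def MeanSensitive {Z : Type*} [MetricSpace Z] (R : Z → Z) : Prop :=
  ∃ δ > 0, ∀ x : Z, ∀ ε > 0, ∃ y : Z, dist x y < ε ∧
    δ < Filter.limsup (avgDist R x y) Filter.atTop

/-! The mean distance `limsup (avgDist T x y)` is a pseudometric which can only grow when both
points are moved by the same iterate of `T`, since finitely many initial terms do not affect the
limit of the averages. In a minimal compact system every orbit enters the `r`-ball around the
mean equicontinuous point `x₀`, and a Lebesgue number argument makes this uniform: any two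
sufficiently close points are sent into that ball by a common iterate, where their mean distance
to `x₀`, hence to each other, is small. -/

open Metric Finset

section avgDist

variable {Z : Type*} [MetricSpace Z] (R : Z → Z)

lemma avgDist_nonneg (x y : Z) (n : ℕ) : 0 ≤ avgDist R x y n := by
  unfold avgDist; positivity

lemma avgDist_comm (x y : Z) : avgDist R x y = avgDist R y x := by
  funext n; simp only [avgDist, dist_comm]

lemma avgDist_le_add (x y z : Z) (n : ℕ) :
    avgDist R x z n ≤ avgDist R x y n + avgDist R y z n := by
  unfold avgDist
  rw [← mul_add, ← sum_add_distrib]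
  gcongr
  exact dist_triangle _ _ _

lemma avgDist_le_diam [BoundedSpace Z] (x y : Z) (n : ℕ) :
    avgDist R x y n ≤ diam (Set.univ : Set Z) := by
  rcases n.eq_zero_or_pos with rfl | hn
  · simp [avgDist, diam_nonneg]
  calc avgDist R x y n ≤ (n : ℝ)⁻¹ * ∑ _i ∈ range n, diam (Set.univ : Set Z) := by
        unfold avgDist
        gcongr
        exact dist_le_diam_of_mem BoundedSpace.bounded_univ trivial trivial
    _ = diam (Set.univ : Set Z) := by
        rw [sum_const, card_range, nsmul_eq_mul, inv_mul_cancel_left₀ (by positivity)]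

lemma avgDist_add_le (x y : Z) (n k : ℕ) :
    avgDist R x y (k + n) ≤ ((k + n : ℕ) : ℝ)⁻¹ * ∑ i ∈ range n, dist (R^[i] x) (R^[i] y)
      + avgDist R (R^[n] x) (R^[n] y) k := by
  have hshift : ∑ i ∈ range k, dist (R^[n + i] x) (R^[n + i] y)
      = ∑ i ∈ range k, dist (R^[i] (R^[n] x)) (R^[i] (R^[n] y)) := by
    refine sum_congr rfl fun i _ => ?_
    rw [add_comm n i, Function.iterate_add_apply, Function.iterate_add_apply]
  rcases k.eq_zero_or_pos with rfl | hk
  · simp [avgDist]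
  rw [avgDist, add_comm k n, sum_range_add, mul_add, hshift, avgDist]
  gcongr
  omega

lemma isBoundedUnder_ge_avgDist (x y : Z) : IsBoundedUnder (· ≥ ·) atTop (avgDist R x y) :=
  isBoundedUnder_of ⟨0, avgDist_nonneg R x y⟩

lemma isCoboundedUnder_le_avgDist (x y : Z) : IsCoboundedUnder (· ≤ ·) atTop (avgDist R x y) :=
  (isBoundedUnder_ge_avgDist R x y).isCoboundedUnder_le

variable [BoundedSpace Z]

lemma isBoundedUnder_le_avgDist (x y : Z) : IsBoundedUnder (· ≤ ·) atTop (avgDist R x y) :=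
  isBoundedUnder_of ⟨_, avgDist_le_diam R x y⟩

lemma limsup_avgDist_le_add (x y z : Z) :
    limsup (avgDist R x z) atTop ≤ limsup (avgDist R x y) atTop + limsup (avgDist R y z) atTop :=
  calc limsup (avgDist R x z) atTop ≤ limsup (avgDist R x y + avgDist R y z) atTop :=
        limsup_le_limsup (Eventually.of_forall (avgDist_le_add R x y z))
          (isCoboundedUnder_le_avgDist R x z)
          (isBoundedUnder_le_add (isBoundedUnder_le_avgDist R x y)
            (isBoundedUnder_le_avgDist R y z))
    _ ≤ limsup (avgDist R x y) atTop + limsup (avgDist R y z) atTop :=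
        limsup_add_le (isBoundedUnder_ge_avgDist R x y)
          (isBoundedUnder_le_avgDist R x y) (isCoboundedUnder_le_avgDist R y z)
          (isBoundedUnder_le_avgDist R y z)

lemma limsup_avgDist_le_iterate (x y : Z) (n : ℕ) :
    limsup (avgDist R x y) atTop ≤ limsup (avgDist R (R^[n] x) (R^[n] y)) atTop := by
  set C := ∑ i ∈ range n, dist (R^[i] x) (R^[i] y)
  have hC : Tendsto (fun k : ℕ => ((k + n : ℕ) : ℝ)⁻¹ * C) atTop (𝓝 0) := by
    simpa using (tendsto_inv_atTop_nhds_zero_nat.comp (tendsto_add_atTop_nat n)).mul_const C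
  rw [← limsup_nat_add _ n]
  calc limsup (fun k => avgDist R x y (k + n)) atTop
      ≤ limsup ((fun k : ℕ => ((k + n : ℕ) : ℝ)⁻¹ * C) + avgDist R (R^[n] x) (R^[n] y)) atTop :=
        limsup_le_limsup (Eventually.of_forall (avgDist_add_le R x y n))
          (isBoundedUnder_of ⟨0, fun k => avgDist_nonneg R x y (k + n)⟩).isCoboundedUnder_le
          (isBoundedUnder_le_add hC.isBoundedUnder_le (isBoundedUnder_le_avgDist R _ _))
    _ ≤ limsup (fun k : ℕ => ((k + n : ℕ) : ℝ)⁻¹ * C) atTop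
          + limsup (avgDist R (R^[n] x) (R^[n] y)) atTop :=
        limsup_add_le hC.isBoundedUnder_ge hC.isBoundedUnder_le
          (isCoboundedUnder_le_avgDist R _ _) (isBoundedUnder_le_avgDist R _ _)
    _ = limsup (avgDist R (R^[n] x) (R^[n] y)) atTop := by rw [hC.limsup_eq, zero_add]

end avgDist

lemma exists_forall_dist_lt_exists_iterate_mem_ball {X : Type*} [MetricSpace X] [CompactSpace X]
    {T : X → X} (hT : Continuous T) (hmin : ∀ x : X, Dense (Set.range fun n : ℕ => T^[n] x))
    (x₀ : X) {r : ℝ} (hr : 0 < r) :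
    ∃ δ > 0, ∀ x y : X, dist x y < δ → ∃ n, T^[n] x ∈ ball x₀ r ∧ T^[n] y ∈ ball x₀ r := by
  have hvisit (z : X) : ∃ n, T^[n] z ∈ ball x₀ r := by
    obtain ⟨_, ⟨n, rfl⟩, hn⟩ := (hmin z).exists_mem_open isOpen_ball ⟨x₀, mem_ball_self hr⟩
    exact ⟨n, hn⟩
  choose N hN using hvisit
  obtain ⟨δ, hδ, hleb⟩ := lebesgue_number_lemma_of_metric isCompact_univ
    (fun z => isOpen_ball.preimage (hT.iterate (N z)))
    (fun z _ => Set.mem_iUnion.2 ⟨z, hN z⟩)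
  refine ⟨δ, hδ, fun x y hxy => ?_⟩
  obtain ⟨z, hz⟩ := hleb x trivial
  exact ⟨N z, hz (mem_ball_self hδ), hz (mem_ball'.2 hxy)⟩

theorem minimal_almost_meanEquicontinuous_is_meanEquicontinuous
    {X : Type*} [MetricSpace X] [CompactSpace X] (T : X → X) (hT : Continuous T)
    (hmin : ∀ x : X, Dense (Set.range fun n : ℕ => T^[n] x))
    (h : ∃ x : X, MeanEqPtAt T x) :
    MeanEquicontinuous T := by
  obtain ⟨x₀, hx₀⟩ := h
  intro ε hε
  obtain ⟨r, hr, hx₀r⟩ := hx₀ (ε / 2) (half_pos hε)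
  obtain ⟨δ, hδ, hreturn⟩ := exists_forall_dist_lt_exists_iterate_mem_ball hT hmin x₀ hr
  refine ⟨δ, hδ, fun x y hxy => ?_⟩
  obtain ⟨n, hx, hy⟩ := hreturn x y hxy
  calc limsup (avgDist T x y) atTop
      ≤ limsup (avgDist T (T^[n] x) (T^[n] y)) atTop := limsup_avgDist_le_iterate T x y n
    _ ≤ limsup (avgDist T x₀ (T^[n] x)) atTop + limsup (avgDist T x₀ (T^[n] y)) atTop := by
        rw [avgDist_comm T x₀]; exact limsup_avgDist_le_add T _ x₀ _
    _ < ε / 2 + ε / 2 := add_lt_add (hx₀r _ (mem_ball'.1 hx)) (hx₀r _ (mem_ball'.1 hy))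
    _ = ε := add_halves ε
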